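/- arXiv:2310.09879 — 7 statements merged into one kernel-verified Lean document; each statement's English description precedes it below -/
import Mathlib

section
/- Let Ω be a finite set with |Ω| ≥ 3. A distorted belief φ : Δ(Ω) → Δ(Ω) is positive, coherent, and continuous if and only if there exist a function ψ : Ω → ℝ with ψ(ω) > 0 for all ω and a real number α > 0 such that for every p ∈ Δ(Ω) and every ω ∈ Ω, φ(p)(ω) = ψ(ω)·p(ω)^α / Σ_{ω'∈Ω} ψ(ω')·p(ω')^α (with the convention 0^α = 0). -/
open Finset

/-- `p` is a probability distribution on the finite set `Ω`. -/
def IsDist {Ω : Type*} [Fintype Ω] (p : Ω → ℝ) : Prop :=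
  (∀ ω, 0 ≤ p ω) ∧ ∑ ω, p ω = 1

/-- The conditional distribution `p(·|E)` of `p` given the event `E`. -/
noncomputable def condOn {Ω : Type*} [Fintype Ω] [DecidableEq Ω]
    (p : Ω → ℝ) (E : Finset Ω) : Ω → ℝ :=
  fun ω => if ω ∈ E then p ω / ∑ ω' ∈ E, p ω' else 0

/-- A distorted belief is positive if `φ(p)(E) = 0` iff `p(E) = 0`. -/
def PositiveBelief {Ω : Type*} [Fintype Ω] (φ : (Ω → ℝ) → Ω → ℝ) : Prop :=
  ∀ p, IsDist p → ∀ E : Finset Ω, (∑ ω ∈ E, φ p ω = 0 ↔ ∑ ω ∈ E, p ω = 0)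

/-- A distorted belief is coherent if distortion commutes with conditioning:
for all `p` and events `E` with `p(E) > 0`, `φ(p(·|E)) = φ(p)(·|E)`. -/
def CoherentBelief {Ω : Type*} [Fintype Ω] [DecidableEq Ω] (φ : (Ω → ℝ) → Ω → ℝ) : Prop :=
  ∀ p, IsDist p → ∀ E : Finset Ω, 0 < ∑ ω ∈ E, p ω →
    φ (condOn p E) = condOn (φ p) E

/-!
Coherence on the event `{x, y}` shows that the distorted odds `φ(p)(x) / φ(p)(y)` depend only on
the odds `s = p(x) / p(y)`, through a function `g_{xy}(s)`. Conditioning three-point distributions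
gives the cocycle identity `g_{xz}(st) = g_{xy}(s) g_{yz}(t)`. Since a third point is always
available, the normalized odds `g_{xy}(s) / g_{xy}(1)` do not depend on the pair and are
multiplicative in `s`, so by continuity they equal `s ^ α`; positivity at the boundary forces
`g_{xy}(s) → 0` as `s → 0`, hence `α > 0`. Finally `g_{xy}(1) = ψ(x) / ψ(y)` with `ψ` the distortion
of the uniform distribution, and a distribution is determined by its odds.
-/
noncomputable def normalizeWeights {Ω : Type*} [Fintype Ω] (w : Ω → ℝ) : Ω → ℝ :=
  fun ω => w ω / ∑ ω', w ω'

section Normalize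

variable {Ω : Type*} [Fintype Ω] {w : Ω → ℝ}

lemma isDist_normalizeWeights (hw : ∀ ω, 0 ≤ w ω) (hsum : 0 < ∑ ω, w ω) :
    IsDist (normalizeWeights w) :=
  ⟨fun ω => div_nonneg (hw ω) hsum.le, by
    simp only [normalizeWeights, ← Finset.sum_div, div_self hsum.ne']⟩

lemma normalizeWeights_pos_iff (hsum : 0 < ∑ ω, w ω) (ω : Ω) :
    0 < normalizeWeights w ω ↔ 0 < w ω :=
  div_pos_iff_of_pos_right hsum

lemma normalizeWeights_div_normalizeWeights (hsum : ∑ ω, w ω ≠ 0) (x y : Ω) :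
    normalizeWeights w x / normalizeWeights w y = w x / w y :=
  div_div_div_cancel_right₀ hsum _ _

lemma normalizeWeights_const_mul {c : ℝ} (hc : c ≠ 0) (w : Ω → ℝ) :
    normalizeWeights (fun ω => c * w ω) = normalizeWeights w := by
  funext ω
  simp only [normalizeWeights, ← Finset.mul_sum, mul_div_mul_left _ _ hc]

lemma continuousOn_normalizeWeights :
    ContinuousOn (normalizeWeights : (Ω → ℝ) → Ω → ℝ) {w | ∑ ω, w ω ≠ 0} :=
  continuousOn_pi.2 fun _ => ContinuousOn.div (by fun_prop) (by fun_prop) fun _ hw => hw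

lemma eq_normalizeWeights_of_mul_eq_mul {q : Ω → ℝ}
    (hq : ∑ ω, q ω = 1) (hw : ∑ ω, w ω ≠ 0) (h : ∀ x y, q x * w y = q y * w x) :
    q = normalizeWeights w := by
  funext x
  rw [normalizeWeights, eq_div_iff hw, Finset.mul_sum]
  simp_rw [h x]
  rw [← Finset.sum_mul, hq, one_mul]

variable [DecidableEq Ω] {p q : Ω → ℝ} {E : Finset Ω}

lemma condOn_eq_normalizeWeights (p : Ω → ℝ) (E : Finset Ω) :
    condOn p E = normalizeWeights (fun ω => if ω ∈ E then p ω else 0) := by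
  funext ω
  simp only [condOn, normalizeWeights, Finset.sum_ite_mem, Finset.univ_inter]
  split_ifs <;> simp

lemma isDist_condOn (hp : IsDist p) (hE : 0 < ∑ ω ∈ E, p ω) : IsDist (condOn p E) := by
  rw [condOn_eq_normalizeWeights]
  refine isDist_normalizeWeights (fun ω => ?_) (by rwa [Finset.sum_ite_mem, Finset.univ_inter])
  split_ifs
  exacts [hp.1 ω, le_rfl]

lemma condOn_div_condOn {x y : Ω} (hx : x ∈ E) (hy : y ∈ E) (hE : ∑ ω ∈ E, p ω ≠ 0) :
    condOn p E x / condOn p E y = p x / p y := by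
  simp only [condOn, if_pos hx, if_pos hy]
  exact div_div_div_cancel_right₀ hE _ _

lemma condOn_eq_of_eqOn_const_mul {c : ℝ} (hc : c ≠ 0) (h : ∀ ω ∈ E, p ω = c * q ω) :
    condOn p E = condOn q E := by
  rw [condOn_eq_normalizeWeights, condOn_eq_normalizeWeights,
    ← normalizeWeights_const_mul hc (fun ω => if ω ∈ E then q ω else 0)]
  congr 1
  funext ω
  split_ifs with hω
  exacts [h ω hω, (mul_zero c).symm]

lemma condOn_normalizeWeights (hsum : ∑ ω, w ω ≠ 0) (E : Finset Ω) :
    condOn (normalizeWeights w) E = condOn w E :=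
  condOn_eq_of_eqOn_const_mul (inv_ne_zero hsum) fun _ _ => div_eq_inv_mul _ _

end Normalize

section Belief

variable {Ω : Type*} [Fintype Ω] {φ : (Ω → ℝ) → Ω → ℝ} {p q : Ω → ℝ}

lemma PositiveBelief.apply_eq_zero_iff (hpos : PositiveBelief φ) (hp : IsDist p) (ω : Ω) :
    φ p ω = 0 ↔ p ω = 0 := by
  simpa using hpos p hp {ω}

lemma PositiveBelief.apply_pos_iff (hpos : PositiveBelief φ)
    (hmap : ∀ p, IsDist p → IsDist (φ p)) (hp : IsDist p) (ω : Ω) :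
    0 < φ p ω ↔ 0 < p ω := by
  rw [((hmap p hp).1 ω).lt_iff_ne', (hp.1 ω).lt_iff_ne', Ne, Ne, hpos.apply_eq_zero_iff hp]

variable [DecidableEq Ω]

lemma CoherentBelief.div_apply_condOn (hcoh : CoherentBelief φ) (hpos : PositiveBelief φ)
    (hp : IsDist p) {E : Finset Ω} (hE : 0 < ∑ ω ∈ E, p ω) {x y : Ω} (hx : x ∈ E) (hy : y ∈ E) :
    φ (condOn p E) x / φ (condOn p E) y = φ p x / φ p y := by
  rw [hcoh p hp E hE, condOn_div_condOn hx hy]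
  exact fun h => hE.ne' ((hpos p hp E).1 h)

lemma CoherentBelief.div_apply_eq_of_div_eq (hcoh : CoherentBelief φ) (hpos : PositiveBelief φ)
    (hp : IsDist p) (hq : IsDist q) {x y : Ω} (hpx : 0 < p x) (hpy : 0 < p y) (hqx : 0 < q x)
    (hqy : 0 < q y) (h : p x / p y = q x / q y) :
    φ p x / φ p y = φ q x / φ q y := by
  have hpos_pair : ∀ r : Ω → ℝ, IsDist r → 0 < r x → 0 < ∑ ω ∈ {x, y}, r ω := fun r hr hrx =>
    hrx.trans_le (Finset.single_le_sum (fun ω _ => hr.1 ω) (Finset.mem_insert_self x {y}))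
  have hx : x ∈ ({x, y} : Finset Ω) := Finset.mem_insert_self x {y}
  have hy : y ∈ ({x, y} : Finset Ω) := Finset.mem_insert_of_mem (Finset.mem_singleton_self y)
  rw [← hcoh.div_apply_condOn hpos hp (hpos_pair p hp hpx) hx hy,
    ← hcoh.div_apply_condOn hpos hq (hpos_pair q hq hqx) hx hy,
    condOn_eq_of_eqOn_const_mul (c := p y / q y) (div_pos hpy hqy).ne']
  intro ω hω
  rcases Finset.mem_insert.1 hω with rfl | hω
  · rw [div_eq_div_iff hpy.ne' hqy.ne'] at h
    field_simp
    linarith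
  · rw [Finset.mem_singleton.1 hω]
    field_simp

end Belief

section Odds

variable {Ω : Type*} [Fintype Ω] [DecidableEq Ω] {φ : (Ω → ℝ) → Ω → ℝ}

lemma sum_single_add_single (x y : Ω) (a b : ℝ) :
    ∑ ω, (Pi.single x a + Pi.single y b : Ω → ℝ) ω = a + b := by
  simp [Finset.sum_add_distrib]

noncomputable def oddsDist (x y : Ω) (s : ℝ) : Ω → ℝ :=
  normalizeWeights (Pi.single x s + Pi.single y 1)

lemma isDist_oddsDist (x y : Ω) {s : ℝ} (hs : 0 ≤ s) : IsDist (oddsDist x y s) := by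
  refine isDist_normalizeWeights (fun ω => ?_) (by rw [sum_single_add_single]; positivity)
  simp only [Pi.add_apply, Pi.single_apply]
  split_ifs <;> positivity

lemma oddsDist_apply_left {x y : Ω} (hxy : x ≠ y) (s : ℝ) : oddsDist x y s x = s / (s + 1) := by
  rw [oddsDist, normalizeWeights, sum_single_add_single]
  simp [hxy]

lemma oddsDist_apply_right {x y : Ω} (hxy : x ≠ y) (s : ℝ) : oddsDist x y s y = 1 / (s + 1) := by
  rw [oddsDist, normalizeWeights, sum_single_add_single]
  simp [hxy.symm]

lemma continuousOn_oddsDist (x y : Ω) :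
    ContinuousOn (oddsDist x y) (Set.Ici 0) := by
  refine continuousOn_normalizeWeights.comp
    ((continuous_single (A := fun _ => ℝ) x).add continuous_const :
      Continuous fun s : ℝ => (Pi.single x s + Pi.single y 1 : Ω → ℝ)).continuousOn
    fun s (hs : 0 ≤ s) => ?_
  rw [Set.mem_ofPred_eq, sum_single_add_single]
  positivity

lemma oddsDist_pos_left {x y : Ω} (hxy : x ≠ y) {s : ℝ} (hs : 0 < s) : 0 < oddsDist x y s x := by
  rw [oddsDist_apply_left hxy]
  positivity

lemma oddsDist_pos_right {x y : Ω} (hxy : x ≠ y) {s : ℝ} (hs : 0 ≤ s) :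
    0 < oddsDist x y s y := by
  rw [oddsDist_apply_right hxy]
  positivity

lemma oddsDist_div {x y : Ω} (hxy : x ≠ y) {s : ℝ} (hs : 0 ≤ s) :
    oddsDist x y s x / oddsDist x y s y = s := by
  rw [oddsDist_apply_left hxy, oddsDist_apply_right hxy]
  field_simp

noncomputable def distortedOdds (φ : (Ω → ℝ) → Ω → ℝ) (x y : Ω) (s : ℝ) : ℝ :=
  φ (oddsDist x y s) x / φ (oddsDist x y s) y

end Odds

def IsOddsCocycle {ι : Type*} (G : ι → ι → ℝ → ℝ) : Prop :=
  ∀ ⦃x y z : ι⦄, x ≠ y → x ≠ z → y ≠ z → ∀ ⦃s t : ℝ⦄, 0 < s → 0 < t →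
    G x z (s * t) = G x y s * G y z t

namespace IsOddsCocycle

variable {ι : Type*} {G : ι → ι → ℝ → ℝ}

lemma div_apply_one (hG : IsOddsCocycle G) (hG1 : ∀ x y, x ≠ y → G x y 1 ≠ 0) :
    IsOddsCocycle fun x y s => G x y s / G x y 1 := by
  intro x y z hxy hxz hyz s t hs ht
  have h1 := hG hxy hxz hyz one_pos one_pos
  rw [one_mul] at h1
  dsimp only
  rw [hG hxy hxz hyz hs ht, h1]
  have := hG1 x y hxy
  have := hG1 y z hyz
  field_simp

variable (hG : IsOddsCocycle G) (hG1 : ∀ x y, x ≠ y → G x y 1 = 1)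
include hG hG1

lemma apply_congr_right {x y y' : ι} (hxy : x ≠ y) (hxy' : x ≠ y') {s : ℝ} (hs : 0 < s) :
    G x y s = G x y' s := by
  rcases eq_or_ne y y' with rfl | hyy'
  · rfl
  · rw [← mul_one s, hG hxy hxy' hyy' hs one_pos, hG1 y y' hyy', mul_one, mul_one]

lemma apply_congr_left {x x' y : ι} (hxy : x ≠ y) (hx'y : x' ≠ y) {s : ℝ} (hs : 0 < s) :
    G x y s = G x' y s := by
  rcases eq_or_ne x x' with rfl | hxx'
  · rfl
  · rw [← one_mul s, hG hxx' hxy hx'y one_pos hs, hG1 x x' hxx', one_mul, one_mul]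

lemma apply_eq_apply (h3 : 3 ≤ ENat.card ι) {x y x' y' : ι} (hxy : x ≠ y) (hxy' : x' ≠ y')
    {s : ℝ} (hs : 0 < s) : G x y s = G x' y' s := by
  rcases ne_or_eq x y' with hxy'' | rfl
  · rw [hG.apply_congr_right hG1 hxy hxy'' hs, hG.apply_congr_left hG1 hxy'' hxy' hs]
  · obtain ⟨z, hzx, hzx'⟩ := ENat.exists_ne_ne_of_three_le h3 x x'
    rw [hG.apply_congr_right hG1 hxy hzx.symm hs, hG.apply_congr_left hG1 hzx.symm hzx'.symm hs,
      hG.apply_congr_right hG1 hzx'.symm hxy' hs]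

lemma apply_mul (h3 : 3 ≤ ENat.card ι) {x y : ι} (hxy : x ≠ y) {s t : ℝ} (hs : 0 < s)
    (ht : 0 < t) : G x y (s * t) = G x y s * G x y t := by
  obtain ⟨z, hzx, hzy⟩ := ENat.exists_ne_ne_of_three_le h3 x y
  rw [hG hzx.symm hxy hzy hs ht, hG.apply_congr_right hG1 hzx.symm hxy hs,
    hG.apply_congr_left hG1 hzy hxy ht]

end IsOddsCocycle

open Filter Topology in
lemma exists_eq_rpow_of_map_mul {f : ℝ → ℝ} (hcont : ContinuousOn f (Set.Ioi 0))
    (hpos : ∀ s, 0 < s → 0 < f s) (hmul : ∀ s t, 0 < s → 0 < t → f (s * t) = f s * f t) :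
    ∃ α : ℝ, ∀ s, 0 < s → f s = s ^ α := by
  let L : ℝ →+ ℝ := AddMonoidHom.mk' (fun u => Real.log (f (Real.exp u))) fun u v => by
    rw [Real.exp_add, hmul _ _ (Real.exp_pos u) (Real.exp_pos v),
      Real.log_mul (hpos _ (Real.exp_pos u)).ne' (hpos _ (Real.exp_pos v)).ne']
  have hL : Continuous L :=
    (hcont.comp_continuous Real.continuous_exp Real.exp_pos).log fun u =>
      (hpos _ (Real.exp_pos u)).ne'
  refine ⟨L 1, fun s hs => ?_⟩
  have hlin : L (Real.log s) = Real.log s * L 1 := by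
    simpa using map_smul (L.toRealLinearMap hL) (Real.log s) 1
  have hlog : L (Real.log s) = Real.log (f s) := by
    simp only [L, AddMonoidHom.mk'_apply, Real.exp_log hs]
  rw [Real.rpow_def_of_pos hs, ← hlin, hlog, Real.exp_log (hpos s hs)]

open Filter Topology in
lemma pos_of_tendsto_rpow_nhdsGT_zero {α : ℝ}
    (h : Tendsto (fun s : ℝ => s ^ α) (𝓝[>] 0) (𝓝 0)) : 0 < α := by
  by_contra! hα
  obtain ⟨s, hs1, hs⟩ :=
    ((h.eventually_lt_const one_pos).and (Ioo_mem_nhdsGT one_pos)).exists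
  exact hs1.not_ge (Real.one_le_rpow_of_pos_of_le_one_of_nonpos hs.1 hs.2.le hα)

section DistortedOdds

variable {Ω : Type*} [Fintype Ω] [DecidableEq Ω] {φ : (Ω → ℝ) → Ω → ℝ}

lemma exists_isDist_div_eq {x y z : Ω} (hxy : x ≠ y) (hxz : x ≠ z) (hyz : y ≠ z) {s t : ℝ}
    (hs : 0 < s) (ht : 0 < t) :
    ∃ p : Ω → ℝ, IsDist p ∧ 0 < p x ∧ 0 < p y ∧ 0 < p z ∧
      p x / p y = s ∧ p y / p z = t ∧ p x / p z = s * t := by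
  set w : Ω → ℝ := Pi.single x (s * t) + Pi.single y t + Pi.single z 1
  have hw : ∀ ω, 0 ≤ w ω := fun ω => by
    simp only [w, Pi.add_apply, Pi.single_apply]
    split_ifs <;> positivity
  have hwx : w x = s * t := by simp [w, hxy, hxz]
  have hwy : w y = t := by simp [w, hxy.symm, hyz]
  have hwz : w z = 1 := by simp [w, hxz.symm, hyz.symm]
  have hsum : 0 < ∑ ω, w ω :=
    (hwz.symm ▸ one_pos : 0 < w z).trans_le
      (Finset.single_le_sum (fun ω _ => hw ω) (Finset.mem_univ z))
  refine ⟨normalizeWeights w, isDist_normalizeWeights hw hsum,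
    (normalizeWeights_pos_iff hsum x).2 (by rw [hwx]; positivity),
    (normalizeWeights_pos_iff hsum y).2 (by rw [hwy]; positivity),
    (normalizeWeights_pos_iff hsum z).2 (by rw [hwz]; positivity), ?_⟩
  simp only [normalizeWeights_div_normalizeWeights hsum.ne', hwx, hwy, hwz, div_one,
    mul_div_cancel_right₀ s ht.ne', and_self]

lemma CoherentBelief.div_apply_eq_distortedOdds (hcoh : CoherentBelief φ)
    (hpos : PositiveBelief φ) {p : Ω → ℝ} (hp : IsDist p) {x y : Ω} (hxy : x ≠ y)
    (hx : 0 < p x) (hy : 0 < p y) :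
    φ p x / φ p y = distortedOdds φ x y (p x / p y) := by
  have hs : 0 < p x / p y := div_pos hx hy
  exact hcoh.div_apply_eq_of_div_eq hpos hp (isDist_oddsDist x y hs.le) hx hy
    (oddsDist_pos_left hxy hs) (oddsDist_pos_right hxy hs.le) (oddsDist_div hxy hs.le).symm

variable (hmap : ∀ p, IsDist p → IsDist (φ p)) (hpos : PositiveBelief φ)
include hmap hpos

lemma distortedOdds_pos {x y : Ω} (hxy : x ≠ y) {s : ℝ} (hs : 0 < s) :
    0 < distortedOdds φ x y s := by
  have hd := isDist_oddsDist x y hs.le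
  exact div_pos ((hpos.apply_pos_iff hmap hd x).2 (oddsDist_pos_left hxy hs))
    ((hpos.apply_pos_iff hmap hd y).2 (oddsDist_pos_right hxy hs.le))

lemma continuousOn_distortedOdds (hcont : ContinuousOn φ {p | IsDist p}) {x y : Ω}
    (hxy : x ≠ y) : ContinuousOn (distortedOdds φ x y) (Set.Ici 0) := by
  have hφ : ContinuousOn (fun s => φ (oddsDist x y s)) (Set.Ici 0) :=
    hcont.comp (continuousOn_oddsDist x y) fun s hs => isDist_oddsDist x y hs
  refine ((continuous_apply x).comp_continuousOn hφ).div
    ((continuous_apply y).comp_continuousOn hφ) fun s (hs : 0 ≤ s) => ?_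
  exact ((hpos.apply_pos_iff hmap (isDist_oddsDist x y hs) y).2 (oddsDist_pos_right hxy hs)).ne'

omit hmap in
lemma distortedOdds_zero {x y : Ω} (hxy : x ≠ y) : distortedOdds φ x y 0 = 0 := by
  rw [distortedOdds, (hpos.apply_eq_zero_iff (isDist_oddsDist x y le_rfl) x).2
    (by rw [oddsDist_apply_left hxy, zero_div]), zero_div]

lemma isOddsCocycle_distortedOdds (hcoh : CoherentBelief φ) :
    IsOddsCocycle (distortedOdds φ) := by
  intro x y z hxy hxz hyz s t hs ht
  obtain ⟨p, hp, hpx, hpy, hpz, hxy', hyz', hxz'⟩ := exists_isDist_div_eq hxy hxz hyz hs ht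
  rw [← hxz', ← hxy', ← hyz', ← hcoh.div_apply_eq_distortedOdds hpos hp hxy hpx hpy,
    ← hcoh.div_apply_eq_distortedOdds hpos hp hyz hpy hpz,
    ← hcoh.div_apply_eq_distortedOdds hpos hp hxz hpx hpz,
    div_mul_div_cancel₀ ((hpos.apply_pos_iff hmap hp y).2 hpy).ne']

end DistortedOdds

section RpowWeights

variable {Ω : Type*} {ψ p : Ω → ℝ} {α : ℝ}

lemma sum_mul_rpow_eq_zero_iff (hψ : ∀ ω, 0 < ψ ω) (hα : α ≠ 0) (hp : ∀ ω, 0 ≤ p ω)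
    (E : Finset Ω) : ∑ ω ∈ E, ψ ω * p ω ^ α = 0 ↔ ∑ ω ∈ E, p ω = 0 := by
  rw [Finset.sum_eq_zero_iff_of_nonneg fun ω _ => mul_nonneg (hψ ω).le (Real.rpow_nonneg (hp ω) α),
    Finset.sum_eq_zero_iff_of_nonneg fun ω _ => hp ω]
  refine forall₂_congr fun ω _ => ?_
  rw [mul_eq_zero, or_iff_right (hψ ω).ne', Real.rpow_eq_zero (hp ω) hα]

lemma sum_mul_rpow_pos [Fintype Ω] (hψ : ∀ ω, 0 < ψ ω) (hα : α ≠ 0) (hp : IsDist p) :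
    0 < ∑ ω, ψ ω * p ω ^ α :=
  (Finset.sum_nonneg fun ω _ => mul_nonneg (hψ ω).le (Real.rpow_nonneg (hp.1 ω) α)).lt_of_ne'
    fun h => one_ne_zero (hp.2 ▸ (sum_mul_rpow_eq_zero_iff hψ hα hp.1 _).1 h)

end RpowWeights

section Forward

variable {Ω : Type*} [Fintype Ω] [DecidableEq Ω] {φ : (Ω → ℝ) → Ω → ℝ}
  (hmap : ∀ p, IsDist p → IsDist (φ p)) (hpos : PositiveBelief φ) (hcoh : CoherentBelief φ)
include hmap hpos hcoh

open Filter Topology in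
lemma exists_distortedOdds_eq_mul_rpow (hΩ : 3 ≤ Fintype.card Ω)
    (hcont : ContinuousOn φ {p | IsDist p}) :
    ∃ α : ℝ, 0 < α ∧ ∀ x y : Ω, x ≠ y → ∀ s, 0 < s →
      distortedOdds φ x y s = distortedOdds φ x y 1 * s ^ α := by
  have h3 : 3 ≤ ENat.card Ω := by simpa [ENat.card_eq_coe_fintype_card] using hΩ
  obtain ⟨a, b, hab⟩ := Fintype.exists_pair_of_one_lt_card (α := Ω) (by omega)
  have hG1 : ∀ x y : Ω, x ≠ y → distortedOdds φ x y 1 ≠ 0 := fun x y hxy =>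
    (distortedOdds_pos hmap hpos hxy one_pos).ne'
  set K : Ω → Ω → ℝ → ℝ := fun x y s => distortedOdds φ x y s / distortedOdds φ x y 1
  have hK : IsOddsCocycle K := (isOddsCocycle_distortedOdds hmap hpos hcoh).div_apply_one hG1
  have hK1 : ∀ x y : Ω, x ≠ y → K x y 1 = 1 := fun x y hxy => div_self (hG1 x y hxy)
  have hKcont : ContinuousOn (K a b) (Set.Ici 0) :=
    (continuousOn_distortedOdds hmap hpos hcont hab).div_const _
  obtain ⟨α, hα⟩ := exists_eq_rpow_of_map_mul (hKcont.mono Set.Ioi_subset_Ici_self)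
    (fun s hs => div_pos (distortedOdds_pos hmap hpos hab hs)
      (distortedOdds_pos hmap hpos hab one_pos))
    (fun s t hs ht => hK.apply_mul hK1 h3 hab hs ht)
  have hK0 : K a b 0 = 0 := by simp only [K, distortedOdds_zero hpos hab, zero_div]
  have hlim : Tendsto (K a b) (𝓝[>] 0) (𝓝 (K a b 0)) :=
    (hKcont 0 Set.self_mem_Ici).tendsto.mono_left (nhdsWithin_mono _ Set.Ioi_subset_Ici_self)
  rw [hK0] at hlim
  refine ⟨α, pos_of_tendsto_rpow_nhdsGT_zero
    (hlim.congr' (eventually_nhdsWithin_of_forall hα)), fun x y hxy s hs => ?_⟩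
  rw [← hα s hs, ← hK.apply_eq_apply hK1 h3 hxy hab hs, mul_div_cancel₀ _ (hG1 x y hxy)]

lemma apply_mul_eq_apply_mul_of_distortedOdds_eq {ψ : Ω → ℝ} {α : ℝ} (hψ : ∀ ω, 0 < ψ ω)
    (hα : α ≠ 0)
    (hodds : ∀ x y : Ω, x ≠ y → ∀ s, 0 < s → distortedOdds φ x y s = ψ x / ψ y * s ^ α)
    {p : Ω → ℝ} (hp : IsDist p) (x y : Ω) :
    φ p x * (ψ y * p y ^ α) = φ p y * (ψ x * p x ^ α) := by
  rcases eq_or_ne x y with rfl | hxy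
  · rfl
  rcases (hp.1 x).eq_or_lt with hx | hx
  · rw [(hpos.apply_eq_zero_iff hp x).2 hx.symm, ← hx, Real.zero_rpow hα]
    ring
  rcases (hp.1 y).eq_or_lt with hy | hy
  · rw [(hpos.apply_eq_zero_iff hp y).2 hy.symm, ← hy, Real.zero_rpow hα]
    ring
  have h := hcoh.div_apply_eq_distortedOdds hpos hp hxy hx hy
  rw [hodds x y hxy _ (div_pos hx hy), Real.div_rpow hx.le hy.le,
    div_eq_iff ((hpos.apply_pos_iff hmap hp y).2 hy).ne'] at h
  have := (hψ y).ne'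
  rw [h]
  field_simp

lemma exists_rpow_representation (hΩ : 3 ≤ Fintype.card Ω)
    (hcont : ContinuousOn φ {p | IsDist p}) :
    ∃ (ψ : Ω → ℝ) (α : ℝ), (∀ ω, 0 < ψ ω) ∧ 0 < α ∧
      ∀ p, IsDist p → ∀ ω, φ p ω = ψ ω * p ω ^ α / ∑ ω', ψ ω' * p ω' ^ α := by
  obtain ⟨α, hα, hodds⟩ := exists_distortedOdds_eq_mul_rpow hmap hpos hcoh hΩ hcont
  have hsum : 0 < ∑ _ω : Ω, (1 : ℝ) := by simpa using (by omega : 0 < Fintype.card Ω)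
  set u : Ω → ℝ := normalizeWeights fun _ => 1
  have hu : IsDist u := isDist_normalizeWeights (fun _ => zero_le_one) hsum
  have hu_pos : ∀ ω, 0 < u ω := fun ω => (normalizeWeights_pos_iff hsum ω).2 one_pos
  have hψ : ∀ ω, 0 < φ u ω := fun ω => (hpos.apply_pos_iff hmap hu ω).2 (hu_pos ω)
  have hodds' : ∀ x y : Ω, x ≠ y → ∀ s, 0 < s →
      distortedOdds φ x y s = φ u x / φ u y * s ^ α := fun x y hxy s hs => by
    rw [hodds x y hxy s hs, hcoh.div_apply_eq_distortedOdds hpos hu hxy (hu_pos x) (hu_pos y),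
      normalizeWeights_div_normalizeWeights hsum.ne', div_one]
  exact ⟨φ u, α, hψ, hα, fun p hp => congrFun (eq_normalizeWeights_of_mul_eq_mul (hmap p hp).2
    (sum_mul_rpow_pos hψ hα.ne' hp).ne'
    (apply_mul_eq_apply_mul_of_distortedOdds_eq hmap hpos hcoh hψ hα.ne' hodds' hp))⟩

end Forward

section Backward

variable {Ω : Type*} [Fintype Ω] {φ : (Ω → ℝ) → Ω → ℝ} {ψ : Ω → ℝ} {α : ℝ}
  (hψ : ∀ ω, 0 < ψ ω) (hα : 0 < α)
  (hrep : ∀ p, IsDist p → ∀ ω, φ p ω = ψ ω * p ω ^ α / ∑ ω', ψ ω' * p ω' ^ α)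
include hψ hα hrep

lemma positiveBelief_of_rpow : PositiveBelief φ := by
  intro p hp E
  simp only [hrep p hp, ← Finset.sum_div, div_eq_zero_iff,
    (sum_mul_rpow_pos hψ hα.ne' hp).ne', or_false]
  exact sum_mul_rpow_eq_zero_iff hψ hα.ne' hp.1 E

lemma coherentBelief_of_rpow [DecidableEq Ω] : CoherentBelief φ := by
  intro p hp E hE
  have hc : ((∑ ω ∈ E, p ω) ^ α)⁻¹ ≠ 0 := inv_ne_zero (Real.rpow_pos_of_pos hE α).ne'
  have hφ : ∀ q, IsDist q → φ q = normalizeWeights fun ω => ψ ω * q ω ^ α :=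
    fun q hq => funext (hrep q hq)
  rw [hφ _ (isDist_condOn hp hE), hφ p hp,
    condOn_normalizeWeights (sum_mul_rpow_pos hψ hα.ne' hp).ne',
    condOn_eq_normalizeWeights (fun ω => ψ ω * p ω ^ α),
    ← normalizeWeights_const_mul hc (fun ω => if ω ∈ E then ψ ω * p ω ^ α else 0)]
  congr 1
  funext ω
  simp only [condOn]
  split_ifs
  · rw [Real.div_rpow (hp.1 ω) hE.le]
    field_simp
  · rw [Real.zero_rpow hα.ne', mul_zero, mul_zero]

lemma continuousOn_of_rpow : ContinuousOn φ {p | IsDist p} := by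
  have hw : Continuous fun (p : Ω → ℝ) ω => ψ ω * p ω ^ α := continuous_pi fun ω =>
    continuous_const.mul ((Real.continuous_rpow_const hα.le).comp (continuous_apply ω))
  exact (continuousOn_normalizeWeights.comp hw.continuousOn
    fun p hp => (sum_mul_rpow_pos hψ hα.ne' hp).ne').congr fun p hp => funext (hrep p hp)

end Backward

/-- **Theorem 1**: for `|Ω| ≥ 3`, a distorted belief `φ : Δ(Ω) → Δ(Ω)` is positive,
coherent, and continuous iff it has a power-weighted representation
`φ(p)(ω) = ψ(ω)·p(ω)^α / Σ_{ω'} ψ(ω')·p(ω')^α` with `ψ > 0` and `α > 0`. -/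
theorem stmt0 {Ω : Type*} [Fintype Ω] [DecidableEq Ω] (hΩ : 3 ≤ Fintype.card Ω)
    (φ : (Ω → ℝ) → Ω → ℝ) (hmap : ∀ p, IsDist p → IsDist (φ p)) :
    (PositiveBelief φ ∧ CoherentBelief φ ∧ ContinuousOn φ {p | IsDist p}) ↔
      ∃ (ψ : Ω → ℝ) (α : ℝ), (∀ ω, 0 < ψ ω) ∧ 0 < α ∧
        ∀ p, IsDist p → ∀ ω,
          φ p ω = ψ ω * p ω ^ α / ∑ ω', ψ ω' * p ω' ^ α := by
  constructor
  · rintro ⟨hpos, hcoh, hcont⟩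
    exact exists_rpow_representation hmap hpos hcoh hΩ hcont
  · rintro ⟨ψ, α, hψ, hα, hrep⟩
    exact ⟨positiveBelief_of_rpow hψ hα hrep, coherentBelief_of_rpow hψ hα hrep,
      continuousOn_of_rpow hψ hα hrep⟩
end

section
/- Let Ω be a finite set and let φ : Δ(Ω) → Δ(Ω) be a power-weighted distorted belief with parameters ψ : Ω → ℝ₊₊ and α > 0. Let p_u ∈ Δ(Ω) denote the uniform distribution. If φ(p_u) ≠ p_u, then there exist states ω_i, ω_j with φ(p_u)(ω_i) ≠ φ(p_u)(ω_j), and for any such pair, α = (ln φ(φ(p_u))(ω_i) − ln φ(φ(p_u))(ω_j)) / (ln φ(p_u)(ω_i) − ln φ(p_u)(ω_j)) − 1. -/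
open Finset

/-- `φ` is a power-weighted distorted belief with weights `ψ` and power `α`. -/
def IsPowerWeighted {Ω : Type*} [Fintype Ω] (φ : (Ω → ℝ) → Ω → ℝ)
    (ψ : Ω → ℝ) (α : ℝ) : Prop :=
  (∀ ω, 0 < ψ ω) ∧ 0 < α ∧
    ∀ p, IsDist p → ∀ ω, φ p ω = ψ ω * p ω ^ α / ∑ ω', ψ ω' * p ω' ^ α

/-- The uniform distribution on `Ω`. -/
noncomputable def uniformDist (Ω : Type*) [Fintype Ω] : Ω → ℝ :=
  fun _ => 1 / Fintype.card Ω

/-- If `φ(p_u) ≠ p_u` for the uniform belief `p_u`, then there are two states at which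
`φ(p_u)` differs, and for any such pair of states the power `α` is identified by
`α = (ln φ²(p_u)(ω_i) − ln φ²(p_u)(ω_j)) / (ln φ(p_u)(ω_i) − ln φ(p_u)(ω_j)) − 1`. -/
theorem stmt2 {Ω : Type*} [Fintype Ω] [Nonempty Ω]
    (φ : (Ω → ℝ) → Ω → ℝ) (ψ : Ω → ℝ) (α : ℝ)
    (hpw : IsPowerWeighted φ ψ α)
    (hne : φ (uniformDist Ω) ≠ uniformDist Ω) :
    (∃ ωi ωj : Ω, φ (uniformDist Ω) ωi ≠ φ (uniformDist Ω) ωj) ∧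
      ∀ ωi ωj : Ω, φ (uniformDist Ω) ωi ≠ φ (uniformDist Ω) ωj →
        α = (Real.log (φ (φ (uniformDist Ω)) ωi) - Real.log (φ (φ (uniformDist Ω)) ωj)) /
              (Real.log (φ (uniformDist Ω) ωi) - Real.log (φ (uniformDist Ω) ωj)) - 1 := by
  obtain ⟨hψ, hα, hφ⟩ := hpw
  have hn : (0:ℝ) < Fintype.card Ω := by
    exact_mod_cast Fintype.card_pos
  set S := ∑ ω', ψ ω' with hSdef
  have hS : 0 < S := Finset.sum_pos (fun ω _ => hψ ω) univ_nonempty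
  have hu : IsDist (uniformDist Ω) := by
    constructor
    · intro ω; unfold uniformDist; positivity
    · simp only [uniformDist, Finset.sum_const, nsmul_eq_mul, Finset.card_univ]
      field_simp
  have hq : ∀ ω, φ (uniformDist Ω) ω = ψ ω / S := by
    intro ω
    rw [hφ _ hu ω]
    have hc : (0:ℝ) < (1 / (Fintype.card Ω : ℝ)) ^ α :=
      Real.rpow_pos_of_pos (by positivity) α
    simp only [uniformDist]
    rw [← Finset.sum_mul, mul_div_mul_right _ _ (ne_of_gt hc)]
  set q := φ (uniformDist Ω) with hqdef
  have hqpos : ∀ ω, 0 < q ω := fun ω => by rw [hq ω]; exact div_pos (hψ ω) hS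
  have hqsum : ∑ ω, q ω = 1 := by
    simp only [hq]
    rw [← Finset.sum_div, div_self (ne_of_gt hS)]
  have hqdist : IsDist q := ⟨fun ω => (hqpos ω).le, hqsum⟩
  constructor
  · by_contra h
    push_neg at h
    apply hne
    funext ω
    have h1 : (Fintype.card Ω : ℝ) * q ω = 1 := by
      calc (Fintype.card Ω : ℝ) * q ω = ∑ ω', q ω' := by
            rw [Finset.sum_congr rfl (fun ω' _ => h ω' ω), Finset.sum_const,
              nsmul_eq_mul, Finset.card_univ]
        _ = 1 := hqsum
    show q ω = uniformDist Ω ω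
    unfold uniformDist
    field_simp
    linarith
  · intro ωi ωj hij
    have hd : Real.log (q ωi) - Real.log (q ωj) ≠ 0 := by
      intro h
      apply hij
      exact Real.log_injOn_pos (Set.mem_Ioi.mpr (hqpos ωi))
        (Set.mem_Ioi.mpr (hqpos ωj)) (by linarith)
    set D := ∑ ω', ψ ω' * q ω' ^ α with hD
    have hDpos : 0 < D :=
      Finset.sum_pos (fun ω _ => mul_pos (hψ ω) (Real.rpow_pos_of_pos (hqpos ω) α))
        univ_nonempty
    have hlog : ∀ ω, Real.log (φ q ω) = Real.log (ψ ω) + α * Real.log (q ω) - Real.log D := by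
      intro ω
      rw [hφ q hqdist ω, Real.log_div (mul_pos (hψ ω)
        (Real.rpow_pos_of_pos (hqpos ω) α)).ne' (ne_of_gt hDpos),
        Real.log_mul (ne_of_gt (hψ ω))
        (ne_of_gt (Real.rpow_pos_of_pos (hqpos ω) α)), Real.log_rpow (hqpos ω)]
    have hlψ : Real.log (ψ ωi) - Real.log (ψ ωj) = Real.log (q ωi) - Real.log (q ωj) := by
      rw [hq ωi, hq ωj, Real.log_div (ne_of_gt (hψ ωi)) (ne_of_gt hS),
        Real.log_div (ne_of_gt (hψ ωj)) (ne_of_gt hS)]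
      ring
    rw [hlog ωi, hlog ωj]
    have key : (Real.log (ψ ωi) + α * Real.log (q ωi) - Real.log D) -
        (Real.log (ψ ωj) + α * Real.log (q ωj) - Real.log D) =
        (1 + α) * (Real.log (q ωi) - Real.log (q ωj)) := by
      linear_combination hlψ
    rw [key, mul_div_assoc, div_self hd]
    ring
end

section
/- Let Ω be a finite set, u : Ω → ℝ, K > 0, Λ > 0, and let p ∈ Δ(Ω) have full support. Then the function q ↦ Σ_ω u(ω)q(ω) − (1/K)·Σ_ω q(ω)·(ln q(ω) − Λ·ln p(ω)) on Δ(Ω) attains its maximum uniquely at q* given by q*(ω) = e^{K·u(ω)}·p(ω)^Λ / Σ_{ω'} e^{K·u(ω')}·p(ω')^Λ. Consequently the solution map p ↦ q* of the motivated beliefs problem with Λ-KL costs and utilities u is the power-weighted distortion function with weights ψ(ω) = e^{K·u(ω)} and power α = Λ. -/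
/-! Multiplied by `K`, the objective becomes `Σ q (f − log q)` for the potential
`f = K u + Λ log p`, and `e^f = e^{K u} p^Λ`. For distributions `q` and the Gibbs distribution
`g = e^f / Σ e^f`, the gap between the values at `g` and at `q` is `Σ g · klFun (q / g)`,
where `klFun x = x log x + 1 − x ≥ 0` vanishes only at `x = 1`; so `g` is the unique maximiser. -/

open Finset

/-- The objective of the motivated-beliefs problem with `Λ`-KL costs and utilities `u`:
`u·q − (1/K)·Σ_ω q(ω)(ln q(ω) − Λ ln p(ω))` (with the convention `0·ln 0 = 0`,
which holds automatically since `Real.log 0 = 0`). -/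
noncomputable def mbObjective {Ω : Type*} [Fintype Ω]
    (u : Ω → ℝ) (K Lam : ℝ) (p q : Ω → ℝ) : ℝ :=
  (∑ ω, u ω * q ω) -
    (1 / K) * ∑ ω, q ω * (Real.log (q ω) - Lam * Real.log (p ω))

open Real InformationTheory

section Gibbs

variable {Ω : Type*} [Fintype Ω]

lemma mul_klFun_div_eq (q : ℝ) {w : ℝ} (hw : 0 < w) :
    w * klFun (q / w) = q * (log q - log w) + w - q := by
  rcases eq_or_ne q 0 with rfl | hq
  · simp [klFun_apply]
  · rw [klFun_apply, log_div hq hw.ne']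
    field_simp

lemma sum_mul_log_sub_log_eq_neg_sum_klFun {q r : Ω → ℝ} (hqr : ∑ ω, q ω = ∑ ω, r ω)
    (hr : ∀ ω, 0 < r ω) :
    ∑ ω, q ω * (log (r ω) - log (q ω)) = -∑ ω, r ω * klFun (q ω / r ω) := by
  have hterm ω : r ω * klFun (q ω / r ω) = -(q ω * (log (r ω) - log (q ω))) + r ω - q ω := by
    rw [mul_klFun_div_eq _ (hr ω)]
    ring
  simp only [hterm, sum_sub_distrib, sum_add_distrib, sum_neg_distrib, hqr]
  ring

lemma sum_mul_log_sub_log_nonpos {q r : Ω → ℝ} (hq : ∀ ω, 0 ≤ q ω)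
    (hqr : ∑ ω, q ω = ∑ ω, r ω) (hr : ∀ ω, 0 < r ω) :
    ∑ ω, q ω * (log (r ω) - log (q ω)) ≤ 0 := by
  rw [sum_mul_log_sub_log_eq_neg_sum_klFun hqr hr, neg_nonpos]
  exact sum_nonneg fun ω _ => mul_nonneg (hr ω).le (klFun_nonneg (div_nonneg (hq ω) (hr ω).le))

lemma eq_of_sum_mul_log_sub_log_eq_zero {q r : Ω → ℝ} (hq : ∀ ω, 0 ≤ q ω)
    (hqr : ∑ ω, q ω = ∑ ω, r ω) (hr : ∀ ω, 0 < r ω)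
    (h : ∑ ω, q ω * (log (r ω) - log (q ω)) = 0) : q = r := by
  have hnonneg ω : 0 ≤ r ω * klFun (q ω / r ω) :=
    mul_nonneg (hr ω).le (klFun_nonneg (div_nonneg (hq ω) (hr ω).le))
  rw [sum_mul_log_sub_log_eq_neg_sum_klFun hqr hr, neg_eq_zero,
    sum_eq_zero_iff_of_nonneg fun ω _ => hnonneg ω] at h
  funext ω
  have hkl : klFun (q ω / r ω) = 0 :=
    (mul_eq_zero.mp (h ω (mem_univ ω))).resolve_left (hr ω).ne'
  rwa [klFun_eq_zero_iff (div_nonneg (hq ω) (hr ω).le), div_eq_one_iff_eq (hr ω).ne'] at hkl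

lemma nonempty_of_sum_eq_one {q : Ω → ℝ} (hq : ∑ ω, q ω = 1) : Nonempty Ω :=
  univ_nonempty_iff.mp (nonempty_of_sum_ne_zero (hq ▸ one_ne_zero))

noncomputable def gibbsDist (f : Ω → ℝ) (ω : Ω) : ℝ :=
  exp (f ω) / ∑ ω', exp (f ω')

lemma sum_exp_pos [Nonempty Ω] (f : Ω → ℝ) : 0 < ∑ ω, exp (f ω) :=
  sum_pos (fun ω _ => exp_pos (f ω)) univ_nonempty

lemma gibbsDist_pos [Nonempty Ω] (f : Ω → ℝ) (ω : Ω) : 0 < gibbsDist f ω :=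
  div_pos (exp_pos _) (sum_exp_pos f)

lemma isDist_gibbsDist [Nonempty Ω] (f : Ω → ℝ) : IsDist (gibbsDist f) :=
  ⟨fun ω => (gibbsDist_pos f ω).le, by
    simp only [gibbsDist, ← sum_div]
    exact div_self (sum_exp_pos f).ne'⟩

lemma log_gibbsDist [Nonempty Ω] (f : Ω → ℝ) (ω : Ω) :
    log (gibbsDist f ω) = f ω - log (∑ ω', exp (f ω')) := by
  rw [gibbsDist, log_div (exp_pos _).ne' (sum_exp_pos f).ne', log_exp]

lemma sum_mul_sub_log_eq_log_sum_exp_add {f q : Ω → ℝ} (hq : ∑ ω, q ω = 1) :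
    ∑ ω, q ω * (f ω - log (q ω)) =
      log (∑ ω, exp (f ω)) + ∑ ω, q ω * (log (gibbsDist f ω) - log (q ω)) := by
  have := nonempty_of_sum_eq_one hq
  simp only [log_gibbsDist, mul_sub, sum_sub_distrib, ← sum_mul, hq]
  ring

lemma sum_mul_sub_log_le_gibbsDist {f q : Ω → ℝ} (hq : IsDist q) :
    ∑ ω, q ω * (f ω - log (q ω)) ≤
      ∑ ω, gibbsDist f ω * (f ω - log (gibbsDist f ω)) := by
  have := nonempty_of_sum_eq_one hq.2
  rw [sum_mul_sub_log_eq_log_sum_exp_add hq.2,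
    sum_mul_sub_log_eq_log_sum_exp_add (isDist_gibbsDist f).2]
  simp only [sub_self, mul_zero, sum_const_zero, add_zero, add_le_iff_nonpos_right]
  exact sum_mul_log_sub_log_nonpos hq.1 (by rw [hq.2, (isDist_gibbsDist f).2]) (gibbsDist_pos f)

lemma eq_gibbsDist_of_sum_mul_sub_log_eq {f q : Ω → ℝ} (hq : IsDist q)
    (h : ∑ ω, q ω * (f ω - log (q ω)) =
      ∑ ω, gibbsDist f ω * (f ω - log (gibbsDist f ω))) :
    q = gibbsDist f := by
  have := nonempty_of_sum_eq_one hq.2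
  rw [sum_mul_sub_log_eq_log_sum_exp_add hq.2,
    sum_mul_sub_log_eq_log_sum_exp_add (isDist_gibbsDist f).2] at h
  simp only [sub_self, mul_zero, sum_const_zero, add_zero, add_eq_left] at h
  exact eq_of_sum_mul_log_sub_log_eq_zero hq.1 (by rw [hq.2, (isDist_gibbsDist f).2])
    (gibbsDist_pos f) h

end Gibbs

section MotivatedBeliefs

variable {Ω : Type*} [Fintype Ω]

lemma mul_mbObjective_eq (u : Ω → ℝ) {K : ℝ} (hK : K ≠ 0) (Lam : ℝ) (p q : Ω → ℝ) :
    K * mbObjective u K Lam p q = ∑ ω, q ω * ((K * u ω + Lam * log (p ω)) - log (q ω)) := by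
  rw [mbObjective, mul_sub, mul_sum, ← mul_assoc, mul_one_div_cancel hK, one_mul,
    ← sum_sub_distrib]
  exact sum_congr rfl fun ω _ => by ring

lemma gibbsDist_add_mul_log (u : Ω → ℝ) (K Lam : ℝ) {p : Ω → ℝ} (hp : ∀ ω, 0 < p ω) :
    gibbsDist (fun ω => K * u ω + Lam * log (p ω)) =
      fun ω => exp (K * u ω) * p ω ^ Lam / ∑ ω', exp (K * u ω') * p ω' ^ Lam := by
  have hexp ω : exp (K * u ω + Lam * log (p ω)) = exp (K * u ω) * p ω ^ Lam := by
    rw [exp_add, rpow_def_of_pos (hp ω), mul_comm Lam]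
  funext ω
  simp only [gibbsDist, hexp]

end MotivatedBeliefs

theorem stmt12_general {Ω : Type*} [Fintype Ω]
    (u : Ω → ℝ) (K Lam : ℝ) (hK : 0 < K)
    (p : Ω → ℝ) (hp : IsDist p) (hfull : ∀ ω, 0 < p ω)
    (qstar : Ω → ℝ)
    (hqstar : ∀ ω, qstar ω =
      Real.exp (K * u ω) * p ω ^ Lam / ∑ ω', Real.exp (K * u ω') * p ω' ^ Lam) :
    IsDist qstar ∧
      (∀ q, IsDist q → mbObjective u K Lam p q ≤ mbObjective u K Lam p qstar) ∧
      (∀ q, IsDist q → mbObjective u K Lam p q = mbObjective u K Lam p qstar →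
        q = qstar) := by
  have := nonempty_of_sum_eq_one hp.2
  obtain rfl : qstar = gibbsDist fun ω => K * u ω + Lam * log (p ω) := by
    rw [gibbsDist_add_mul_log u K Lam hfull]
    exact funext hqstar
  refine ⟨isDist_gibbsDist _, fun q hq => ?_, fun q hq hmax => ?_⟩
  · refine le_of_mul_le_mul_left ?_ hK
    rw [mul_mbObjective_eq u hK.ne', mul_mbObjective_eq u hK.ne']
    exact sum_mul_sub_log_le_gibbsDist hq
  · apply eq_gibbsDist_of_sum_mul_sub_log_eq hq
    rw [← mul_mbObjective_eq u hK.ne', ← mul_mbObjective_eq u hK.ne', hmax]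

/-- **Proposition**: the motivated-beliefs problem with `Λ`-KL costs and utilities `u`
has the unique solution `q*(ω) = e^{K·u(ω)}·p(ω)^Λ / Σ_{ω'} e^{K·u(ω')}·p(ω')^Λ`; hence
the solution map is the power-weighted distortion with weights `ψ(ω) = e^{K·u(ω)}` and
power `α = Λ`. -/
theorem stmt12 {Ω : Type*} [Fintype Ω]
    (u : Ω → ℝ) (K Lam : ℝ) (hK : 0 < K) (hLam : 0 < Lam)
    (p : Ω → ℝ) (hp : IsDist p) (hfull : ∀ ω, 0 < p ω)
    (qstar : Ω → ℝ)
    (hqstar : ∀ ω, qstar ω =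
      Real.exp (K * u ω) * p ω ^ Lam / ∑ ω', Real.exp (K * u ω') * p ω' ^ Lam) :
    IsDist qstar ∧
      (∀ q, IsDist q → mbObjective u K Lam p q ≤ mbObjective u K Lam p qstar) ∧
      (∀ q, IsDist q → mbObjective u K Lam p q = mbObjective u K Lam p qstar →
        q = qstar) :=
  stmt12_general u K Lam hK p hp hfull qstar hqstar
end

section
/- Let Ω be a finite set and let φ : Δ(Ω) → Δ(Ω) be a power-weighted distortion function with parameters ψ : Ω → ℝ₊₊ and α > 0. If φ is idempotent (φ ∘ φ = φ), then φ is the identity map on Δ(Ω); equivalently, α = 1 and ψ is constant. -/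
open Finset

open scoped Classical

private lemma sum_pos_dist {Ω : Type*} [Fintype Ω] {ψ : Ω → ℝ} {α : ℝ}
    (hψ : ∀ ω, 0 < ψ ω) {p : Ω → ℝ} (hp : IsDist p) :
    0 < ∑ ω, ψ ω * p ω ^ α := by
  obtain ⟨ω0, hω0⟩ : ∃ ω, 0 < p ω := by
    by_contra h
    push_neg at h
    have h0 : ∑ ω, p ω = 0 := Finset.sum_eq_zero fun ω _ => le_antisymm (h ω) (hp.1 ω)
    have := hp.2
    linarith
  exact Finset.sum_pos'
    (fun ω _ => mul_nonneg (hψ ω).le (Real.rpow_nonneg (hp.1 ω) α))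
    ⟨ω0, Finset.mem_univ _, mul_pos (hψ ω0) (Real.rpow_pos_of_pos hω0 α)⟩

private lemma dist_phi {Ω : Type*} [Fintype Ω] {φ : (Ω → ℝ) → Ω → ℝ} {ψ : Ω → ℝ} {α : ℝ}
    (hψ : ∀ ω, 0 < ψ ω)
    (hφ : ∀ p, IsDist p → ∀ ω, φ p ω = ψ ω * p ω ^ α / ∑ ω', ψ ω' * p ω' ^ α)
    {p : Ω → ℝ} (hp : IsDist p) : IsDist (φ p) := by
  have hS : 0 < ∑ ω', ψ ω' * p ω' ^ α := sum_pos_dist hψ hp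
  constructor
  · intro ω
    rw [hφ p hp ω]
    exact div_nonneg (mul_nonneg (hψ ω).le (Real.rpow_nonneg (hp.1 ω) α)) hS.le
  · rw [Finset.sum_congr rfl (fun ω _ => hφ p hp ω), ← Finset.sum_div, div_self hS.ne']

private lemma twopt_dist {Ω : Type*} [Fintype Ω] {a b : Ω} (hab : a ≠ b)
    {t : ℝ} (ht0 : 0 ≤ t) (ht1 : t ≤ 1) :
    IsDist (fun ω => (if ω = a then t else 0) + (if ω = b then 1 - t else 0)) := by
  constructor
  · intro ω
    have h1 : (0:ℝ) ≤ if ω = a then t else 0 := by split <;> linarith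
    have h2 : (0:ℝ) ≤ if ω = b then 1 - t else 0 := by split <;> linarith
    exact add_nonneg h1 h2
  · rw [Finset.sum_add_distrib, Finset.sum_ite_eq' Finset.univ a (fun _ => t),
      Finset.sum_ite_eq' Finset.univ b (fun _ => 1 - t)]
    simp only [Finset.mem_univ, if_true]
    ring

private lemma twopt_sum {Ω : Type*} [Fintype Ω] {a b : Ω} (hab : a ≠ b) (f : Ω → ℝ)
    (h0 : ∀ ω, ω ≠ a → ω ≠ b → f ω = 0) : ∑ ω, f ω = f a + f b := by
  have h1 : ∑ ω ∈ ({a, b} : Finset Ω), f ω = ∑ ω, f ω := by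
    apply Finset.sum_subset (Finset.subset_univ _)
    intro x _ hx
    simp only [Finset.mem_insert, Finset.mem_singleton] at hx
    push_neg at hx
    exact h0 x hx.1 hx.2
  rw [← h1, Finset.sum_pair hab]

/-- **Proposition (idempotence)**: an idempotent power-weighted distortion function is
the identity map on `Δ(Ω)`. -/
theorem stmt14 {Ω : Type*} [Fintype Ω]
    (φ : (Ω → ℝ) → Ω → ℝ) (ψ : Ω → ℝ) (α : ℝ)
    (hpw : IsPowerWeighted φ ψ α)
    (hidem : ∀ p, IsDist p → φ (φ p) = φ p) :
    ∀ p, IsDist p → φ p = p := by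
  obtain ⟨hψ, hα, hφ⟩ := hpw
  -- key fixed-point equation
  have key : ∀ p, IsDist p → ∀ a b : Ω,
      ψ a * (φ p a) ^ α * (φ p b) = ψ b * (φ p b) ^ α * (φ p a) := by
    intro p hp a b
    have hqd : IsDist (φ p) := dist_phi hψ hφ hp
    have hid : φ (φ p) = φ p := hidem p hp
    have hfix : ∀ ω, φ p ω = ψ ω * (φ p ω) ^ α / ∑ ω', ψ ω' * (φ p ω') ^ α := by
      intro ω
      conv_lhs => rw [← hid]
      exact hφ (φ p) hqd ω
    have hS : 0 < ∑ ω', ψ ω' * (φ p ω') ^ α := sum_pos_dist hψ hqd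
    have ha : φ p a * (∑ ω', ψ ω' * (φ p ω') ^ α) = ψ a * (φ p a) ^ α := by
      conv_lhs => rw [hfix a]
      exact div_mul_cancel₀ _ hS.ne'
    have hb : φ p b * (∑ ω', ψ ω' * (φ p ω') ^ α) = ψ b * (φ p b) ^ α := by
      conv_lhs => rw [hfix b]
      exact div_mul_cancel₀ _ hS.ne'
    calc ψ a * (φ p a) ^ α * (φ p b)
        = φ p a * (∑ ω', ψ ω' * (φ p ω') ^ α) * (φ p b) := by rw [ha]
      _ = (φ p b * (∑ ω', ψ ω' * (φ p ω') ^ α)) * (φ p a) := by ring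
      _ = ψ b * (φ p b) ^ α * (φ p a) := by rw [hb]
  by_cases hsub : ∀ a b : Ω, a = b
  · -- essentially one-point space
    intro p hp
    funext ω
    have huniv : (Finset.univ : Finset Ω) = {ω} :=
      Finset.eq_singleton_iff_unique_mem.2 ⟨Finset.mem_univ _, fun x _ => hsub x ω⟩
    have h1 : p ω = 1 := by
      have := hp.2; rwa [huniv, Finset.sum_singleton] at this
    rw [hφ p hp ω, huniv, Finset.sum_singleton, h1, Real.one_rpow, mul_one,
      div_self (hψ ω).ne']
  push_neg at hsub
  obtain ⟨a0, b0, hab0⟩ := hsub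
  -- the key equation on two-point distributions
  have keypair : ∀ a b : Ω, a ≠ b → ∀ t : ℝ, 0 < t → t < 1 →
      ∀ S : ℝ, S = ψ a * t ^ α + ψ b * (1 - t) ^ α →
      ψ a * (ψ a * t ^ α / S) ^ α * (ψ b * (1 - t) ^ α / S)
        = ψ b * (ψ b * (1 - t) ^ α / S) ^ α * (ψ a * t ^ α / S) := by
    intro a b hab t ht0 ht1 S hSdef
    set p : Ω → ℝ := fun ω => (if ω = a then t else 0) + (if ω = b then 1 - t else 0)
      with hpdef
    have hp : IsDist p := twopt_dist hab ht0.le (by linarith)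
    have hpa : p a = t := by simp [hpdef, hab]
    have hpb : p b = 1 - t := by simp [hpdef, hab, Ne.symm hab]
    have hsum : ∑ ω', ψ ω' * p ω' ^ α = S := by
      rw [twopt_sum hab (fun ω => ψ ω * p ω ^ α) (fun ω h1 h2 => by
        simp [hpdef, h1, h2, Real.zero_rpow hα.ne'])]
      rw [hpa, hpb, hSdef]
    have hqa : φ p a = ψ a * t ^ α / S := by rw [hφ p hp a, hsum, hpa]
    have hqb : φ p b = ψ b * (1 - t) ^ α / S := by rw [hφ p hp b, hsum, hpb]
    have := key p hp a b
    rwa [hqa, hqb] at this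
  -- ψ is constant
  have hψconst : ∀ a b : Ω, ψ a = ψ b := by
    intro a b
    by_cases hab : a = b
    · rw [hab]
    have hu : (0:ℝ) < (1/2 : ℝ) ^ α := Real.rpow_pos_of_pos (by norm_num) α
    have hS : 0 < ψ a * (1/2:ℝ) ^ α + ψ b * (1/2:ℝ) ^ α :=
      add_pos (mul_pos (hψ a) hu) (mul_pos (hψ b) hu)
    have hE := keypair a b hab (1/2) (by norm_num) (by norm_num)
      (ψ a * (1/2:ℝ) ^ α + ψ b * (1/2:ℝ) ^ α)
      (by rw [show (1:ℝ) - 1/2 = 1/2 by norm_num])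
    rw [show (1:ℝ) - 1/2 = 1/2 by norm_num] at hE
    set k : ℝ := (1/2:ℝ) ^ α / (ψ a * (1/2:ℝ) ^ α + ψ b * (1/2:ℝ) ^ α) with hk_def
    have hk : 0 < k := div_pos hu hS
    simp only [mul_div_assoc, ← hk_def] at hE
    rw [Real.mul_rpow (hψ a).le hk.le, Real.mul_rpow (hψ b).le hk.le] at hE
    have hC : ψ a * ψ b * (k ^ α * k) ≠ 0 :=
      (mul_pos (mul_pos (hψ a) (hψ b)) (mul_pos (Real.rpow_pos_of_pos hk α) hk)).ne'
    have hE2 : ψ a ^ α * (ψ a * ψ b * (k ^ α * k))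
        = ψ b ^ α * (ψ a * ψ b * (k ^ α * k)) := by linear_combination hE
    exact (Real.rpow_left_inj (hψ a).le (hψ b).le hα.ne').1 (mul_right_cancel₀ hC hE2)
  -- α = 1
  have hα1 : α = 1 := by
    by_contra hne
    have hc := hψconst a0 b0
    have h13 : (0:ℝ) < (1/3 : ℝ) ^ α := Real.rpow_pos_of_pos (by norm_num) α
    have h23 : (0:ℝ) < (2/3 : ℝ) ^ α := Real.rpow_pos_of_pos (by norm_num) α
    have hS : (0:ℝ) < ψ a0 * (1/3:ℝ) ^ α + ψ b0 * (2/3:ℝ) ^ α :=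
      add_pos (mul_pos (hψ a0) h13) (mul_pos (hψ b0) h23)
    have hE := keypair a0 b0 hab0 (1/3) (by norm_num) (by norm_num)
      (ψ a0 * (1/3:ℝ) ^ α + ψ b0 * (2/3:ℝ) ^ α)
      (by rw [show (1:ℝ) - 1/3 = 2/3 by norm_num])
    rw [show (1:ℝ) - 1/3 = 2/3 by norm_num] at hE
    set x : ℝ := ψ a0 * (1/3:ℝ) ^ α / (ψ a0 * (1/3:ℝ) ^ α + ψ b0 * (2/3:ℝ) ^ α)
      with hx_def
    set y : ℝ := ψ b0 * (2/3:ℝ) ^ α / (ψ a0 * (1/3:ℝ) ^ α + ψ b0 * (2/3:ℝ) ^ α)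
      with hy_def
    have hx : 0 < x := by rw [hx_def]; exact div_pos (mul_pos (hψ a0) h13) hS
    have hy : 0 < y := by rw [hy_def]; exact div_pos (mul_pos (hψ b0) h23) hS
    have hxy : x ≠ y := by
      intro h
      rw [hx_def, hy_def, div_eq_div_iff hS.ne' hS.ne'] at h
      have h2 := mul_right_cancel₀ hS.ne' h
      rw [hc] at h2
      have h3 := mul_left_cancel₀ (hψ b0).ne' h2
      have := (Real.rpow_left_inj (by norm_num : (0:ℝ) ≤ 1/3)
        (by norm_num : (0:ℝ) ≤ 2/3) hα.ne').1 h3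
      norm_num at this
    have hE2 : x ^ α * y = y ^ α * x := by
      rw [hc] at hE
      exact mul_left_cancel₀ (hψ b0).ne' (by linear_combination hE)
    have h3 : x ^ (α - 1) = y ^ (α - 1) := by
      rw [Real.rpow_sub hx, Real.rpow_sub hy, Real.rpow_one, Real.rpow_one,
        div_eq_div_iff hx.ne' hy.ne']
      exact hE2
    exact hxy ((Real.rpow_left_inj hx.le hy.le (sub_ne_zero.2 hne)).1 h3)
  -- conclude
  intro p hp
  funext ω
  rw [hφ p hp ω, hα1]
  simp only [Real.rpow_one]
  have hsum : ∑ ω', ψ ω' * p ω' = ψ ω := by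
    rw [Finset.sum_congr rfl (fun x _ => by rw [hψconst x ω]), ← Finset.mul_sum, hp.2, mul_one]
  rw [hsum, mul_comm, mul_div_assoc, div_self (hψ ω).ne', mul_one]
end

section
/- Let Ω be a finite set and let φ : Δ(Ω) → Δ(Ω) be a power-weighted distortion function with parameters ψ : Ω → ℝ₊₊ and α > 0. For n ≥ 1, let φ^1 = φ and φ^n = φ ∘ φ^{n−1}. Then for every p ∈ Δ(Ω), every n ≥ 1, and every ω with p(ω) > 0, φ^n(p)(ω) = p(ω)^{α^n}·ψ(ω)^{Σ_{i=0}^{n−1} α^i} / Σ_{ω' : p(ω') > 0} p(ω')^{α^n}·ψ(ω')^{Σ_{i=0}^{n−1} α^i}, and φ^n(p)(ω) = 0 whenever p(ω) = 0. -/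
open Finset

/-- **Iterates of a power-weighted distortion**: for every `n ≥ 1` and every state `ω`
in the support of `p`,
`φⁿ(p)(ω) = p(ω)^{αⁿ}·ψ(ω)^{Σ_{i<n} αⁱ} / Σ_{ω' : p(ω')>0} p(ω')^{αⁿ}·ψ(ω')^{Σ_{i<n} αⁱ}`,
and `φⁿ(p)(ω) = 0` whenever `p(ω) = 0`. -/
theorem stmt15 {Ω : Type*} [Fintype Ω]
    (φ : (Ω → ℝ) → Ω → ℝ) (ψ : Ω → ℝ) (α : ℝ)
    (hpw : IsPowerWeighted φ ψ α) :
    ∀ p, IsDist p → ∀ n : ℕ, 1 ≤ n → ∀ ω : Ω,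
      (0 < p ω →
        φ^[n] p ω =
          p ω ^ (α ^ n) * ψ ω ^ (∑ i ∈ Finset.range n, α ^ i) /
            ∑ ω' ∈ Finset.univ.filter (fun ω' => 0 < p ω'),
              p ω' ^ (α ^ n) * ψ ω' ^ (∑ i ∈ Finset.range n, α ^ i)) ∧
      (p ω = 0 → φ^[n] p ω = 0) := by
  obtain ⟨hψ, hα, hφ⟩ := hpw
  -- every distribution has a positive coordinate
  have hex : ∀ p : Ω → ℝ, IsDist p → ∃ ω, 0 < p ω := by
    intro p hp
    by_contra h
    push_neg at h
    have : ∀ ω, p ω = 0 := fun ω => le_antisymm (h ω) (hp.1 ω)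
    have : (∑ ω, p ω) = 0 := Finset.sum_eq_zero fun ω _ => this ω
    rw [hp.2] at this
    norm_num at this
  -- the denominator of φ is positive
  have hSpos : ∀ p : Ω → ℝ, IsDist p → 0 < ∑ ω', ψ ω' * p ω' ^ α := by
    intro p hp
    obtain ⟨ω₀, hω₀⟩ := hex p hp
    refine Finset.sum_pos' (fun ω _ => ?_) ⟨ω₀, Finset.mem_univ _, ?_⟩
    · exact mul_nonneg (hψ ω).le (Real.rpow_nonneg (hp.1 ω) α)
    · exact mul_pos (hψ ω₀) (Real.rpow_pos_of_pos hω₀ α)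
  -- φ maps distributions to distributions
  have hdist : ∀ p : Ω → ℝ, IsDist p → IsDist (φ p) := by
    intro p hp
    have hS := hSpos p hp
    constructor
    · intro ω
      rw [hφ p hp ω]
      exact div_nonneg (mul_nonneg (hψ ω).le (Real.rpow_nonneg (hp.1 ω) α)) hS.le
    · have : ∑ ω, φ p ω = ∑ ω, ψ ω * p ω ^ α / ∑ ω', ψ ω' * p ω' ^ α :=
        Finset.sum_congr rfl fun ω _ => hφ p hp ω
      rw [this, ← Finset.sum_div, div_self hS.ne']
  intro p hp n hn
  have hiter : ∀ m : ℕ, IsDist (φ^[m] p) := by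
    intro m
    induction m with
    | zero => exact hp
    | succ m ih => rw [Function.iterate_succ_apply']; exact hdist _ ih
  induction n, hn using Nat.le_induction with
  | base =>
    intro ω
    have hsum :
        (∑ ω' ∈ Finset.univ.filter (fun ω' => 0 < p ω'),
            p ω' ^ (α ^ 1) * ψ ω' ^ (∑ i ∈ Finset.range 1, α ^ i)) =
          ∑ ω', ψ ω' * p ω' ^ α := by
      rw [Finset.sum_filter]
      refine Finset.sum_congr rfl fun ω' _ => ?_
      by_cases h : 0 < p ω'
      · simp [h, pow_one, Finset.sum_range_one, Real.rpow_one, mul_comm]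
      · have : p ω' = 0 := le_antisymm (not_lt.1 h) (hp.1 ω')
        simp [h, this, Real.zero_rpow hα.ne']
    constructor
    · intro hω
      rw [Function.iterate_one, hφ p hp ω, hsum]
      simp [pow_one, Finset.sum_range_one, Real.rpow_one, mul_comm]
    · intro hω
      rw [Function.iterate_one, hφ p hp ω, hω, Real.zero_rpow hα.ne', mul_zero, zero_div]
  | succ n hn IH =>
    set T : ℝ := ∑ i ∈ Finset.range n, α ^ i with hT
    set T' : ℝ := ∑ i ∈ Finset.range (n + 1), α ^ i with hT'def
    have hT' : T' = T * α + 1 := by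
      rw [hT'def, Finset.sum_range_succ']
      simp [pow_succ, ← Finset.sum_mul, hT]
    set q : Ω → ℝ := φ^[n] p with hq
    have hqd : IsDist q := hiter n
    set A : Ω → ℝ := fun ω' => p ω' ^ (α ^ n) * ψ ω' ^ T with hA
    set S : ℝ := ∑ ω' ∈ Finset.univ.filter (fun ω' => 0 < p ω'), A ω' with hS
    obtain ⟨ω₀, hω₀⟩ := hex p hp
    have hSpos' : 0 < S := by
      rw [hS]
      refine Finset.sum_pos' (fun ω' hm => ?_) ⟨ω₀, Finset.mem_filter.2 ⟨Finset.mem_univ _, hω₀⟩, ?_⟩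
      · exact mul_nonneg (Real.rpow_nonneg (hp.1 ω') _) (Real.rpow_nonneg (hψ ω').le _)
      · exact mul_pos (Real.rpow_pos_of_pos hω₀ _) (Real.rpow_pos_of_pos (hψ ω₀) _)
    -- key algebraic identity
    have key : ∀ ω', 0 < p ω' →
        ψ ω' * (A ω' / S) ^ α = (p ω' ^ (α ^ (n + 1)) * ψ ω' ^ T') / S ^ α := by
      intro ω' hpos
      have hA0 : 0 ≤ A ω' :=
        mul_nonneg (Real.rpow_nonneg (hp.1 ω') _) (Real.rpow_nonneg (hψ ω').le _)
      rw [Real.div_rpow hA0 hSpos'.le, hA,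
        Real.mul_rpow (Real.rpow_nonneg (hp.1 ω') _) (Real.rpow_nonneg (hψ ω').le _),
        ← Real.rpow_mul (hp.1 ω'), ← Real.rpow_mul (hψ ω').le, hT',
        Real.rpow_add (hψ ω'), Real.rpow_one]
      rw [pow_succ]
      ring
    intro ω
    constructor
    · intro hω
      rw [Function.iterate_succ_apply', ← hq, hφ q hqd ω]
      have hqω : q ω = A ω / S := by
        have := (IH ω).1 hω
        rw [this]
      have hden : (∑ ω', ψ ω' * q ω' ^ α) =
          (∑ ω' ∈ Finset.univ.filter (fun ω' => 0 < p ω'),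
            p ω' ^ (α ^ (n + 1)) * ψ ω' ^ T') / S ^ α := by
        rw [Finset.sum_div]
        rw [← Finset.sum_filter_of_ne (p := fun ω' => 0 < p ω')
          (f := fun ω' => ψ ω' * q ω' ^ α) (s := Finset.univ) ?_]
        · refine Finset.sum_congr rfl fun ω' hm => ?_
          have hpos : 0 < p ω' := (Finset.mem_filter.1 hm).2
          rw [(IH ω').1 hpos, key ω' hpos]
        · intro ω' _ hne
          by_contra h
          have hz : p ω' = 0 := le_antisymm (not_lt.1 h) (hp.1 ω')
          exact hne (by simp [(IH ω').2 hz, Real.zero_rpow hα.ne'])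
      rw [hqω, key ω hω, hden, div_div_div_comm,
        div_self (Real.rpow_pos_of_pos hSpos' α).ne', div_one]
    · intro hω
      rw [Function.iterate_succ_apply', ← hq, hφ q hqd ω, (IH ω).2 hω,
        Real.zero_rpow hα.ne', mul_zero, zero_div]
end

section
/- Let Ω be a finite set and let φ : Δ(Ω) → Δ(Ω) be a power-weighted distortion function with parameters ψ : Ω → ℝ₊₊ and α with 0 < α < 1. Then for every p ∈ Δ(Ω), the limit φ*(p) = lim_{n→∞} φ^n(p) exists, and for every ω with p(ω) > 0, φ*(p)(ω) = ψ(ω)^{1/(1−α)} / Σ_{ω' : p(ω') > 0} ψ(ω')^{1/(1−α)}, while φ*(p)(ω) = 0 for every ω with p(ω) = 0. -/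
open Finset Filter Topology

/-- **Limit beliefs for `0 < α < 1`**: the iterates `φⁿ(p)` converge pointwise, and the
limit puts probability proportional to `ψ(ω)^{1/(1−α)}` on every state in the support
of `p`, and zero elsewhere. -/
theorem stmt16 {Ω : Type*} [Fintype Ω]
    (φ : (Ω → ℝ) → Ω → ℝ) (ψ : Ω → ℝ) (α : ℝ)
    (hpw : IsPowerWeighted φ ψ α) (hα : α < 1) :
    ∀ p, IsDist p → ∀ ω : Ω,
      (0 < p ω →
        Tendsto (fun n => φ^[n] p ω) atTop
          (𝓝 (ψ ω ^ (1 / (1 - α)) /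
            ∑ ω' ∈ Finset.univ.filter (fun ω' => 0 < p ω'), ψ ω' ^ (1 / (1 - α))))) ∧
      (p ω = 0 → Tendsto (fun n => φ^[n] p ω) atTop (𝓝 0)) := by
  obtain ⟨hψ, hα0, hφ⟩ := hpw
  have hα1 : (0:ℝ) < 1 - α := by linarith
  intro p hp
  classical
  -- the unnormalized weights
  set c : ℕ → Ω → ℝ := fun n ω => ψ ω ^ ((1 - α ^ n) / (1 - α)) * p ω ^ (α ^ n) with hcdef
  have hαn : ∀ n : ℕ, (0:ℝ) < α ^ n := fun n => pow_pos hα0 n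
  have hcnn : ∀ n ω, 0 ≤ c n ω := fun n ω =>
    mul_nonneg (Real.rpow_nonneg (hψ ω).le _) (Real.rpow_nonneg (hp.1 ω) _)
  have hcpos : ∀ n ω, 0 < p ω → 0 < c n ω := fun n ω h =>
    mul_pos (Real.rpow_pos_of_pos (hψ ω) _) (Real.rpow_pos_of_pos h _)
  have hω₀ : ∃ ω₀, 0 < p ω₀ := by
    by_contra h
    push_neg at h
    have h0 : ∑ ω, p ω = 0 :=
      Finset.sum_eq_zero fun ω _ => le_antisymm (h ω) (hp.1 ω)
    rw [hp.2] at h0; linarith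
  obtain ⟨ω₀, hω₀⟩ := hω₀
  have hT : ∀ n, 0 < ∑ ω', c n ω' := fun n =>
    Finset.sum_pos' (fun ω _ => hcnn n ω) ⟨ω₀, Finset.mem_univ _, hcpos n ω₀ hω₀⟩
  -- key recursion on unnormalized weights
  have step : ∀ n ω, ψ ω * (c n ω) ^ α = c (n+1) ω := by
    intro n ω
    rcases eq_or_lt_of_le (hp.1 ω) with hpω | hpω
    · simp [hcdef, ← hpω, Real.zero_rpow (hαn n).ne', Real.zero_rpow (hαn (n+1)).ne',
        Real.zero_rpow hα0.ne']
    · have hexp : (1 - α ^ (n+1)) / (1 - α) = (1 - α ^ n) / (1 - α) * α + 1 := by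
        field_simp
        ring
      simp only [hcdef]
      rw [Real.mul_rpow (Real.rpow_nonneg (hψ ω).le _) (Real.rpow_nonneg hpω.le _),
        ← Real.rpow_mul (hψ ω).le, ← Real.rpow_mul hpω.le, hexp,
        Real.rpow_add (hψ ω), Real.rpow_one, pow_succ]
      ring
  -- closed form for the iterates
  have key : ∀ n ω, φ^[n] p ω = c n ω / ∑ ω', c n ω' := by
    intro n
    induction n with
    | zero =>
      intro ω
      have h0 : ∀ ω', c 0 ω' = p ω' := by
        intro ω'
        simp [hcdef, Real.rpow_one]
      simp only [Function.iterate_zero, id_eq, h0, hp.2, div_one]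
    | succ n ih =>
      have hdist : IsDist (φ^[n] p) := by
        constructor
        · intro ω; rw [ih ω]; exact div_nonneg (hcnn n ω) (hT n).le
        · simp only [ih, ← Finset.sum_div]
          exact div_self (hT n).ne'
      intro ω
      have hrw : ∀ ω', ψ ω' * (φ^[n] p ω') ^ α = c (n+1) ω' / (∑ ω'', c n ω'') ^ α := by
        intro ω'
        rw [ih ω', Real.div_rpow (hcnn n ω') (hT n).le, mul_div_assoc', step n ω']
      rw [Function.iterate_succ_apply', hφ _ hdist ω]
      simp only [hrw, ← Finset.sum_div]
      rw [div_div_div_cancel_right₀]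
      exact (Real.rpow_pos_of_pos (hT n) α).ne'
  -- limits of the unnormalized weights
  have hαn0 : Tendsto (fun n => α ^ n) atTop (𝓝 0) :=
    tendsto_pow_atTop_nhds_zero_of_lt_one hα0.le hα
  set L : Ω → ℝ := fun ω => if 0 < p ω then ψ ω ^ (1 / (1 - α)) else 0 with hLdef
  have hcω : ∀ ω, Tendsto (fun n => c n ω) atTop (𝓝 (L ω)) := by
    intro ω
    rcases eq_or_lt_of_le (hp.1 ω) with hpω | hpω
    · have : ∀ n, c n ω = 0 := fun n => by
        simp [hcdef, ← hpω, Real.zero_rpow (hαn n).ne']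
      simp only [this, hLdef, if_neg (lt_irrefl _ |> fun h => h), ← hpω]
      simp
    · have h1 : Tendsto (fun n => ψ ω ^ ((1 - α ^ n) / (1 - α))) atTop
          (𝓝 (ψ ω ^ ((1 - (0:ℝ)) / (1 - α)))) :=
        Filter.Tendsto.rpow tendsto_const_nhds
          ((tendsto_const_nhds.sub hαn0).div_const (1 - α)) (Or.inl (hψ ω).ne')
      have h2 : Tendsto (fun n => p ω ^ (α ^ n)) atTop (𝓝 (p ω ^ (0:ℝ))) :=
        Filter.Tendsto.rpow tendsto_const_nhds hαn0 (Or.inl hpω.ne')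
      have := h1.mul h2
      simp only [Real.rpow_zero, mul_one, sub_zero] at this
      simpa [hcdef, hLdef, if_pos hpω] using this
  have hsum : Tendsto (fun n => ∑ ω', c n ω') atTop (𝓝 (∑ ω', L ω')) :=
    tendsto_finset_sum _ (fun ω _ => hcω ω)
  have hLnn : ∀ ω, 0 ≤ L ω := by
    intro ω
    simp only [hLdef]
    split
    · exact (Real.rpow_pos_of_pos (hψ _) _).le
    · exact le_rfl
  have hLpos : 0 < L ω₀ := by
    simp only [hLdef, if_pos hω₀]
    exact Real.rpow_pos_of_pos (hψ ω₀) _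
  have hD : 0 < ∑ ω', L ω' :=
    Finset.sum_pos' (fun ω _ => hLnn ω) ⟨ω₀, Finset.mem_univ _, hLpos⟩
  have hDeq : ∑ ω' ∈ Finset.univ.filter (fun ω' => 0 < p ω'), ψ ω' ^ (1 / (1 - α))
      = ∑ ω', L ω' := by
    rw [Finset.sum_filter]
  intro ω
  constructor
  · intro hpω
    have htend := (hcω ω).div hsum hD.ne'
    simp only [hLdef, if_pos hpω] at htend
    rw [hDeq]
    simp only [key]
    exact htend
  · intro hpω0
    have hzero : ∀ n, φ^[n] p ω = 0 := fun n => by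
      rw [key n ω]
      simp [hcdef, hpω0, Real.zero_rpow (hαn n).ne']
    simp only [hzero]
    exact tendsto_const_nhds
end

section
/- Let Ω be a finite set and let φ : Δ(Ω) → Δ(Ω) be a power-weighted distortion function with parameters ψ : Ω → ℝ₊₊ and α = 1. Then for every p ∈ Δ(Ω), the limit φ*(p) = lim_{n→∞} φ^n(p) exists; letting M = max{ψ(ω) : p(ω) > 0} and S = {ω : p(ω) > 0 and ψ(ω) = M}, one has φ*(p)(ω) = p(ω) / Σ_{ω'∈S} p(ω') for ω ∈ S and φ*(p)(ω) = 0 otherwise. -/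
open Finset Filter Topology
open scoped Classical

theorem stmt17_aux {Ω : Type*} [Fintype Ω]
    (φ : (Ω → ℝ) → Ω → ℝ) (ψ : Ω → ℝ)
    (hpw : IsPowerWeighted φ ψ 1) (p : Ω → ℝ) (hp : IsDist p) :
    ∀ n ω, φ^[n] p ω = ψ ω ^ n * p ω / ∑ ω', ψ ω' ^ n * p ω' := by
  obtain ⟨hψ, -, hφ⟩ := hpw
  -- positivity of all denominators
  obtain ⟨ω₀, hω₀⟩ : ∃ ω, 0 < p ω := by
    by_contra h
    push_neg at h
    have : ∑ ω, p ω = 0 := Finset.sum_eq_zero fun ω _ => le_antisymm (h ω) (hp.1 ω)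
    rw [hp.2] at this; norm_num at this
  have hD : ∀ n, 0 < ∑ ω', ψ ω' ^ n * p ω' := by
    intro n
    apply Finset.sum_pos' (fun ω' _ => mul_nonneg (pow_nonneg (hψ ω').le _) (hp.1 ω'))
    exact ⟨ω₀, Finset.mem_univ _, mul_pos (pow_pos (hψ ω₀) _) hω₀⟩
  have hstep : ∀ q, IsDist q → IsDist (φ q) ∧
      ∀ ω, φ q ω = ψ ω * q ω / ∑ ω', ψ ω' * q ω' := by
    intro q hq
    have hDq : 0 < ∑ ω', ψ ω' * q ω' := by
      obtain ⟨ω₁, hω₁⟩ : ∃ ω, 0 < q ω := by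
        by_contra h
        push_neg at h
        have : ∑ ω, q ω = 0 := Finset.sum_eq_zero fun ω _ => le_antisymm (h ω) (hq.1 ω)
        rw [hq.2] at this; norm_num at this
      apply Finset.sum_pos' (fun ω' _ => mul_nonneg (hψ ω').le (hq.1 ω'))
      exact ⟨ω₁, Finset.mem_univ _, mul_pos (hψ ω₁) hω₁⟩
    have hform : ∀ ω, φ q ω = ψ ω * q ω / ∑ ω', ψ ω' * q ω' := by
      intro ω
      rw [hφ q hq ω]
      simp [Real.rpow_one]
    refine ⟨⟨fun ω => ?_, ?_⟩, hform⟩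
    · rw [hform ω]
      exact div_nonneg (mul_nonneg (hψ ω).le (hq.1 ω)) hDq.le
    · simp only [hform]
      rw [← Finset.sum_div, div_self hDq.ne']
  -- main induction
  have main : ∀ n, IsDist (φ^[n] p) ∧
      ∀ ω, φ^[n] p ω = ψ ω ^ n * p ω / ∑ ω', ψ ω' ^ n * p ω' := by
    intro n
    induction n with
    | zero => exact ⟨hp, fun ω => by simp [hp.2]⟩
    | succ n ih =>
      have hform : ∀ ω, φ^[n+1] p ω = ψ ω ^ (n+1) * p ω / ∑ ω', ψ ω' ^ (n+1) * p ω' := by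
        intro ω
        rw [Function.iterate_succ_apply']
        rw [(hstep _ ih.1).2 ω]
        have hsum : ∀ ω', ψ ω' * φ^[n] p ω' =
            ψ ω' ^ (n+1) * p ω' / ∑ ω'', ψ ω'' ^ n * p ω'' := by
          intro ω'
          rw [ih.2 ω', pow_succ]
          field_simp
        simp only [hsum, ih.2 ω]
        rw [← Finset.sum_div, mul_div_assoc',
          div_div_div_cancel_right₀ (hD n).ne']
        congr 1
        rw [pow_succ]; ring
      constructor
      · rw [Function.iterate_succ_apply']
        exact (hstep _ ih.1).1
      · exact hform
  exact fun n => (main n).2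

/-- **Limit beliefs for `α = 1`**: the iterates `φⁿ(p)` converge pointwise; with
`S = {ω : p(ω) > 0 and ψ(ω) maximal on the support of p}`, the limit is the Bayesian
update of `p` on `S`: it equals `p(ω)/p(S)` on `S` and `0` elsewhere. -/
theorem stmt17 {Ω : Type*} [Fintype Ω]
    (φ : (Ω → ℝ) → Ω → ℝ) (ψ : Ω → ℝ)
    (hpw : IsPowerWeighted φ ψ 1) :
    ∀ p, IsDist p → ∀ ω : Ω,
      ((0 < p ω ∧ ∀ ω', 0 < p ω' → ψ ω' ≤ ψ ω) →
        Tendsto (fun n => φ^[n] p ω) atTop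
          (𝓝 (p ω /
            ∑ ω' ∈ Finset.univ.filter
              (fun ω' => 0 < p ω' ∧ ∀ ω'', 0 < p ω'' → ψ ω'' ≤ ψ ω'), p ω'))) ∧
      (¬(0 < p ω ∧ ∀ ω', 0 < p ω' → ψ ω' ≤ ψ ω) →
        Tendsto (fun n => φ^[n] p ω) atTop (𝓝 0)) := by
  intro p hp ω
  have key := stmt17_aux φ ψ hpw p hp
  obtain ⟨hψ, -, -⟩ := hpw
  -- support and max
  obtain ⟨ω₀', hω₀'⟩ : ∃ ω, 0 < p ω := by
    by_contra h
    push_neg at h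
    have : ∑ ω, p ω = 0 := Finset.sum_eq_zero fun ω _ => le_antisymm (h ω) (hp.1 ω)
    rw [hp.2] at this; norm_num at this
  set s : Finset Ω := Finset.univ.filter (fun ω' => 0 < p ω') with hs
  have hsne : s.Nonempty := ⟨ω₀', by simp [hs, hω₀']⟩
  set M : ℝ := s.sup' hsne ψ with hM
  have hMpos : 0 < M := by
    obtain ⟨a, ha, hae⟩ := Finset.exists_mem_eq_sup' hsne ψ
    rw [hM, hae]; exact hψ a
  have hle : ∀ ω', 0 < p ω' → ψ ω' ≤ M :=
    fun ω' h => Finset.le_sup' ψ (by simp [hs, h])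
  obtain ⟨ω₀, hω₀mem, hω₀eq⟩ := Finset.exists_mem_eq_sup' hsne ψ
  have hω₀pos : 0 < p ω₀ := by simpa [hs] using hω₀mem
  set S : Finset Ω := Finset.univ.filter
    (fun ω' => 0 < p ω' ∧ ∀ ω'', 0 < p ω'' → ψ ω'' ≤ ψ ω') with hS
  have hSmem : ∀ ω', ω' ∈ S ↔ (0 < p ω' ∧ ψ ω' = M) := by
    intro ω'
    simp only [hS, Finset.mem_filter, Finset.mem_univ, true_and]
    constructor
    · rintro ⟨h1, h2⟩
      refine ⟨h1, le_antisymm (hle ω' h1) ?_⟩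
      rw [hM, hω₀eq]; exact h2 ω₀ hω₀pos
    · rintro ⟨h1, h2⟩
      exact ⟨h1, fun ω'' h'' => h2 ▸ hle ω'' h''⟩
  have hMeq : M = ψ ω₀ := by rw [hM, hω₀eq]
  have hω₀S : ω₀ ∈ S := (hSmem ω₀).2 ⟨hω₀pos, hMeq.symm⟩
  set P : ℝ := ∑ ω' ∈ S, p ω' with hP
  have hPpos : 0 < P := by
    apply Finset.sum_pos' (fun ω' h => hp.1 ω')
    exact ⟨ω₀, hω₀S, ((hSmem ω₀).1 hω₀S).1⟩
  -- termwise tendsto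
  have hterm : ∀ ω', Tendsto (fun n => (ψ ω' / M) ^ n * p ω') atTop
      (𝓝 (if ω' ∈ S then p ω' else 0)) := by
    intro ω'
    by_cases hmem : ω' ∈ S
    · obtain ⟨h1, h2⟩ := (hSmem ω').1 hmem
      simp [hmem, h2, div_self hMpos.ne']
    · rw [if_neg hmem]
      by_cases hpω : 0 < p ω'
      · have hlt : ψ ω' < M := by
          rcases lt_or_eq_of_le (hle ω' hpω) with h | h
          · exact h
          · exact absurd ((hSmem ω').2 ⟨hpω, h⟩) hmem
        have h1 : Tendsto (fun n => (ψ ω' / M) ^ n) atTop (𝓝 0) := by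
          apply tendsto_pow_atTop_nhds_zero_of_lt_one
          · exact div_nonneg (hψ ω').le hMpos.le
          · rw [div_lt_one hMpos]; exact hlt
        simpa using h1.mul_const (p ω')
      · have : p ω' = 0 := le_antisymm (not_lt.1 hpω) (hp.1 ω')
        simp [this]
  have hden : Tendsto (fun n => ∑ ω', (ψ ω' / M) ^ n * p ω') atTop (𝓝 P) := by
    have := tendsto_finset_sum Finset.univ (fun ω' _ => hterm ω')
    convert this using 2
    rw [hP, Finset.sum_ite_mem]
    congr 1
    simp [hS, Finset.filter_filter]
  -- rewrite iterates
  have hDpos : ∀ n, 0 < ∑ ω', ψ ω' ^ n * p ω' := by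
    intro n
    apply Finset.sum_pos' (fun ω' _ => mul_nonneg (pow_nonneg (hψ ω').le _) (hp.1 ω'))
    exact ⟨ω₀, Finset.mem_univ _, mul_pos (pow_pos (hψ ω₀) _) hω₀pos⟩
  have heq : ∀ n, φ^[n] p ω = ((ψ ω / M) ^ n * p ω) / ∑ ω', (ψ ω' / M) ^ n * p ω' := by
    intro n
    rw [key n ω]
    have hsum : ∑ ω', (ψ ω' / M) ^ n * p ω' = (∑ ω', ψ ω' ^ n * p ω') / M ^ n := by
      rw [Finset.sum_div]
      exact Finset.sum_congr rfl fun ω' _ => by rw [div_pow, div_mul_eq_mul_div]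
    rw [hsum, div_pow, div_mul_eq_mul_div,
      div_div_div_cancel_right₀ (pow_pos hMpos n).ne']
  -- main tendsto
  have hnum := hterm ω
  have hmain : Tendsto (fun n => φ^[n] p ω) atTop
      (𝓝 ((if ω ∈ S then p ω else 0) / P)) := by
    have := hnum.div hden hPpos.ne'
    exact Tendsto.congr (fun n => (heq n).symm) this
  constructor
  · intro hcond
    have hmem : ω ∈ S := by simp only [hS, Finset.mem_filter, Finset.mem_univ, true_and]; exact hcond
    rw [if_pos hmem] at hmain
    exact hmain
  · intro hcond
    have hmem : ω ∉ S := by simp only [hS, Finset.mem_filter]; tauto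
    rw [if_neg hmem, zero_div] at hmain
    exact hmain
end
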